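/- Let two discrete latent bipartite graphical models on the same J observed variables (with the same V and H) be given, with K and K′ latent variables respectively, K ≥ 2 and K′ ≥ 2, and J ≥ 2·max(K, K′). Suppose each model satisfies: strictly positive latent pmf, Assumption 1, Assumption 2, the pure-child graph condition, and the pairwise rank condition. If for every subset S ⊆ [J] with |S| = 2·max(K, K′) the marginal distributions of Y_S under the two models coincide, then K = K′ and the graphs satisfy G′ = G·P for some K × K permutation matrix P. (This is the paper's Corollary 1: the bipartite graph is identifiable from the collection of order-2K marginal tensors.) -/

import Mathlib

/-!
All marginals of at most `2m = 2 max(K, K')` observed variables are sums of marginals of exactly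
`2m` of them, so every unfolding `P(Y_T, Y_S)` with `|T ∪ S| ≤ 2m` is the same in both models.
Factoring an unfolding through the latent variables bounds its rank by `H ^ #(parents of T)`;
conversely, when `S` contains a pure child of every latent variable, Assumption 1 makes `P(Y_S | A)`
right-invertible, so the unfolding has the rank of `P(Y_T, A)`. This gives two observable tests.
A pair `{j₁, j₂}` passes "rank `≤ H`" iff both are pure children of one latent variable (the
pairwise rank condition gives the converse), which matches the latent variables of the two models.
For `j` and a set `F` of pure children of all latent variables but `k`, "rank `≤ H ^ (K - 1)`"
holds iff `k` is not a parent of `j`: otherwise `P(Y_j, Y_F, A)` is block diagonal over the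
configurations of the other latent variables, and Assumption 2 makes one block of rank two.
-/

open Matrix MeasureTheory

namespace LBGM

/-- The set of latent variables connected to observed variable `j`. -/
def co {J K : ℕ} (G : Fin J → Fin K → Bool) (j : Fin J) : Finset (Fin K) :=
  Finset.univ.filter (fun k => G j k = true)

/-- The set of latent variables connected to some observed variable in `S`. -/
def coS {J K : ℕ} (G : Fin J → Fin K → Bool) (S : Finset (Fin J)) : Finset (Fin K) :=
  S.biUnion (co G)

/-- `θ j` depends only on the latent coordinates in `co G j`. -/
def DependsOnlyOnCo {J K V H : ℕ} (G : Fin J → Fin K → Bool)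
    (θ : Fin J → (Fin K → Fin H) → Fin V → ℝ) : Prop :=
  ∀ (j : Fin J) (a a' : Fin K → Fin H), (∀ k ∈ co G j, a k = a' k) → θ j a = θ j a'

/-- Every `θ j (· | a)` is a probability vector on `{0,…,V-1}`. -/
def IsCPT {J K V H : ℕ} (θ : Fin J → (Fin K → Fin H) → Fin V → ℝ) : Prop :=
  ∀ j a, (∀ v, 0 ≤ θ j a v) ∧ (∑ v, θ j a v) = 1

/-- `ν` is a probability mass function on `{0,…,H-1}^K`. -/
def IsPMF {K H : ℕ} (ν : (Fin K → Fin H) → ℝ) : Prop :=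
  (∀ a, 0 ≤ ν a) ∧ (∑ a, ν a) = 1

/-- Induced joint pmf of the observed vector `Y`. -/
noncomputable def jointP {J K V H : ℕ} (ν : (Fin K → Fin H) → ℝ)
    (θ : Fin J → (Fin K → Fin H) → Fin V → ℝ) (y : Fin J → Fin V) : ℝ :=
  ∑ a : Fin K → Fin H, ν a * ∏ j, θ j a (y j)

/-- Extend a latent configuration on `S` to all of `[K]`, filling in `0` elsewhere. -/
def extendA {K H : ℕ} [NeZero H] (S : Finset (Fin K)) (a : {k // k ∈ S} → Fin H) :
    Fin K → Fin H :=
  fun k => if h : k ∈ S then a ⟨k, h⟩ else 0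

/-- Conditional probability table `P(Y_M | A_S)`. -/
noncomputable def cpt {J K V H : ℕ} [NeZero H]
    (θ : Fin J → (Fin K → Fin H) → Fin V → ℝ)
    (M : Finset (Fin J)) (S : Finset (Fin K)) :
    Matrix ({j // j ∈ M} → Fin V) ({k // k ∈ S} → Fin H) ℝ :=
  Matrix.of fun y a => ∏ j : {j // j ∈ M}, θ j.1 (extendA S a) (y j)

/-- Unfolded tensor `[T]_{S₁,S₂}`: the matrix of joint marginal probabilities of
`Y_{S₁}` and `Y_{S₂}`. -/
noncomputable def unfoldT {J K V H : ℕ} (ν : (Fin K → Fin H) → ℝ)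
    (θ : Fin J → (Fin K → Fin H) → Fin V → ℝ) (S₁ S₂ : Finset (Fin J)) :
    Matrix ({j // j ∈ S₁} → Fin V) ({j // j ∈ S₂} → Fin V) ℝ :=
  Matrix.of fun r c => ∑ y : Fin J → Fin V,
    if (∀ j : {j // j ∈ S₁}, y j.1 = r j) ∧ (∀ j : {j // j ∈ S₂}, y j.1 = c j)
      then jointP ν θ y else 0

/-- `[T]_{S,:} = [T]_{S, [J]∖S}`. -/
noncomputable def unfoldRow {J K V H : ℕ} (ν : (Fin K → Fin H) → ℝ)
    (θ : Fin J → (Fin K → Fin H) → Fin V → ℝ) (S : Finset (Fin J)) :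
    Matrix ({j // j ∈ S} → Fin V) ({j // j ∈ Sᶜ} → Fin V) ℝ :=
  unfoldT ν θ S Sᶜ

/-- Marginal pmf of `Y_S`. -/
noncomputable def marginalP {J K V H : ℕ} (ν : (Fin K → Fin H) → ℝ)
    (θ : Fin J → (Fin K → Fin H) → Fin V → ℝ) (S : Finset (Fin J))
    (r : {j // j ∈ S} → Fin V) : ℝ :=
  ∑ y : Fin J → Fin V, if ∀ j : {j // j ∈ S}, y j.1 = r j then jointP ν θ y else 0

/-- Assumption 1: single-parent CPTs have full column rank `H`. -/
def Assumption1 {J K V H : ℕ} [NeZero H] (G : Fin J → Fin K → Bool)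
    (θ : Fin J → (Fin K → Fin H) → Fin V → ℝ) : Prop :=
  ∀ j : Fin J, (co G j).card = 1 → (cpt θ {j} (co G j)).rank = H

/-- Assumption 2: each connected latent variable makes a difference. -/
def Assumption2 {J K V H : ℕ} (G : Fin J → Fin K → Bool)
    (θ : Fin J → (Fin K → Fin H) → Fin V → ℝ) : Prop :=
  ∀ j : Fin J, ∀ k ∈ co G j, ∃ a : Fin K → Fin H, ∃ h h' : Fin H,
    θ j (Function.update a k h) ≠ θ j (Function.update a k h')

/-- Pure-child graph condition: every observed variable has a parent and every
latent variable has at least two pure children. -/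
def PureChild {J K : ℕ} (G : Fin J → Fin K → Bool) : Prop :=
  (∀ j, (co G j).Nonempty) ∧
    ∀ k : Fin K,
      2 ≤ (Finset.univ.filter (fun j => co G j = ({k} : Finset (Fin K)))).card

/-- Pairwise rank condition (paper's Lemma 3 conclusion, holding generically). -/
def PairwiseRank {J K V H : ℕ} [NeZero H] (G : Fin J → Fin K → Bool)
    (θ : Fin J → (Fin K → Fin H) → Fin V → ℝ) : Prop :=
  ∀ j₁ j₂ : Fin J, j₁ ≠ j₂ → (¬ ∃ k : Fin K, co G j₁ ∪ co G j₂ = {k}) →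
    H < (cpt θ ({j₁, j₂} : Finset (Fin J)) (co G j₁ ∪ co G j₂)).rank

/-- Khatri–Rao (column-wise Kronecker) product. -/
noncomputable def khatriRao {I J R : ℕ} (A : Matrix (Fin I) (Fin R) ℝ)
    (B : Matrix (Fin J) (Fin R) ℝ) : Matrix (Fin I × Fin J) (Fin R) ℝ :=
  Matrix.of fun p r => A p.1 r * B p.2 r

/-- Kruskal rank: the largest `r` such that every `r` columns are linearly
independent. -/
noncomputable def krank {I R : ℕ} (A : Matrix (Fin I) (Fin R) ℝ) : ℕ :=
  @Nat.findGreatest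
    (fun r => ∀ s : Finset (Fin R), s.card = r →
      LinearIndependent ℝ (fun j : {x // x ∈ s} => (fun i => A i j.1)))
    (Classical.decPred _) R

/-- The joint probability table `P(A_S, A)`. -/
noncomputable def jointLatent {K H : ℕ} (ν : (Fin K → Fin H) → ℝ) (S : Finset (Fin K)) :
    Matrix ({k // k ∈ S} → Fin H) (Fin K → Fin H) ℝ :=
  Matrix.of fun a b => if ∀ k : {k // k ∈ S}, b k.1 = a k then ν b else 0

/-- A family of `m` pairwise disjoint subsets of observed variables witnessing the
rank certificate of Proposition 1. -/
def GoodFamily {J K V H : ℕ} [NeZero H] (ν : (Fin K → Fin H) → ℝ)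
    (θ : Fin J → (Fin K → Fin H) → Fin V → ℝ) (m : ℕ) : Prop :=
  ∃ S : Fin m → Finset (Fin J),
    (∀ l l', l ≠ l' → Disjoint (S l) (S l')) ∧
    (∀ l, 2 ≤ (S l).card) ∧
    (∀ l, ∀ j₁ ∈ S l, ∀ j₂ ∈ S l, j₁ ≠ j₂ →
      (unfoldRow ν θ ({j₁, j₂} : Finset (Fin J))).rank ≤ H) ∧
    (∀ l l', l ≠ l' → ∀ j₁ ∈ S l, ∀ j₂ ∈ S l',
      H < (unfoldRow ν θ ({j₁, j₂} : Finset (Fin J))).rank)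

/-- Index type for the free parameters of the pair `(θ_{j₁}, θ_{j₂})`:
for each `j ∈ {j₁,j₂}`, each latent configuration on `co G j`, and each
`v ∈ {0,…,V-2}` one real parameter (the `v = V-1` entry is determined by
normalization). -/
abbrev ParamIx (V H : ℕ) {J K : ℕ} (G : Fin J → Fin K → Bool) (j₁ j₂ : Fin J) : Type :=
  Σ j : {j // j ∈ ({j₁, j₂} : Finset (Fin J))},
    (({k // k ∈ co G j.1} → Fin H) × Fin (V - 1))

/-- The conditional probability tables determined by a parameter point
`x : ℝ^D`. -/
noncomputable def thetaOf {J K : ℕ} (V H : ℕ) [NeZero H] [NeZero V]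
    (G : Fin J → Fin K → Bool) (j₁ j₂ : Fin J)
    (x : ParamIx V H G j₁ j₂ → ℝ) :
    Fin J → (Fin K → Fin H) → Fin V → ℝ :=
  fun j a v =>
    if hj : j ∈ ({j₁, j₂} : Finset (Fin J)) then
      if hv : v.1 < V - 1 then
        x ⟨⟨j, hj⟩, (fun k => a k.1, ⟨v.1, hv⟩)⟩
      else 1 - ∑ v' : Fin (V - 1), x ⟨⟨j, hj⟩, (fun k => a k.1, v')⟩
    else if v = 0 then 1 else 0

open Finset

variable {J K V H : ℕ}

-- Tables are indexed by full configurations `z : Fin J → Fin V`, of which only `z|_S` matters;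
-- this keeps every index type free of subtypes of `Fin J`.
noncomputable def condTable (θ : Fin J → (Fin K → Fin H) → Fin V → ℝ) (S : Finset (Fin J)) :
    Matrix (Fin K → Fin H) (Fin J → Fin V) ℝ :=
  Matrix.of fun a z => ∏ j ∈ S, θ j a (z j)

noncomputable def jointTable (ν : (Fin K → Fin H) → ℝ) (θ : Fin J → (Fin K → Fin H) → Fin V → ℝ)
    (S : Finset (Fin J)) : Matrix (Fin J → Fin V) (Fin K → Fin H) ℝ :=
  Matrix.of fun z a => ν a * condTable θ S a z

noncomputable def unfolding (ν : (Fin K → Fin H) → ℝ) (θ : Fin J → (Fin K → Fin H) → Fin V → ℝ)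
    (S₁ S₂ : Finset (Fin J)) : Matrix (Fin J → Fin V) (Fin J → Fin V) ℝ :=
  jointTable ν θ S₁ * condTable θ S₂

noncomputable def marginalAt (ν : (Fin K → Fin H) → ℝ) (θ : Fin J → (Fin K → Fin H) → Fin V → ℝ)
    (S : Finset (Fin J)) (z : Fin J → Fin V) : ℝ :=
  ∑ a, ν a * condTable θ S a z

section Marginals

variable (ν : (Fin K → Fin H) → ℝ) (θ : Fin J → (Fin K → Fin H) → Fin V → ℝ)

theorem sum_condTable_mul_prod (S : Finset (Fin J)) (a : Fin K → Fin H) (φ : Fin J → Fin V → ℝ) :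
    ∑ z, condTable θ S a z * ∏ j, φ j (z j)
      = ∏ j, ∑ u, (if j ∈ S then θ j a u else 1) * φ j u := by
  rw [Fintype.prod_sum]
  refine Fintype.sum_congr _ _ fun z => ?_
  rw [condTable, Matrix.of_apply, ← Fintype.prod_ite_mem S, ← prod_mul_distrib]

theorem mul_jointTable_apply {ρ : Type*} (S : Finset (Fin J)) (φ : ρ → Fin J → Fin V → ℝ)
    (x : ρ) (a : Fin K → Fin H) :
    (Matrix.of (fun x (z : Fin J → Fin V) => ∏ j, φ x j (z j)) * jointTable ν θ S) x a
      = ν a * ∏ j, ∑ u, (if j ∈ S then θ j a u else 1) * φ x j u := by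
  rw [← sum_condTable_mul_prod, Matrix.mul_apply, mul_sum]
  exact sum_congr rfl fun z _ => by simp only [jointTable, Matrix.of_apply]; ring

theorem marginalP_eq_marginalAt (hθ : IsCPT θ) (S : Finset (Fin J)) (z : Fin J → Fin V) :
    marginalP ν θ S (fun j => z j) = marginalAt ν θ S z := by
  set φ : Fin J → Fin V → ℝ := fun j u => if j ∈ S then if u = z j then 1 else 0 else 1
  have hφ : ∀ y : Fin J → Fin V,
      (∏ j, φ j (y j)) = if ∀ j : {j // j ∈ S}, y j = z j then 1 else 0 := by
    intro y
    rw [Fintype.prod_ite_mem S (fun j => if y j = z j then (1 : ℝ) else 0), prod_boole]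
    simp only [Subtype.forall]
    congr
  calc marginalP ν θ S (fun j => z j)
      = ∑ a, ν a * ∑ y, condTable θ univ a y * ∏ j, φ j (y j) := by
        simp only [marginalP, jointP, hφ, mul_ite, mul_one, mul_zero, mul_sum, condTable,
          Matrix.of_apply]
        rw [sum_comm]
        refine sum_congr rfl fun y _ => ?_
        split_ifs <;> simp
    _ = marginalAt ν θ S z := by
        refine sum_congr rfl fun a _ => ?_
        rw [sum_condTable_mul_prod, condTable, Matrix.of_apply, ← Fintype.prod_ite_mem S]
        refine congrArg _ (Fintype.prod_congr _ _ fun j => ?_)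
        by_cases hj : j ∈ S <;> simp [φ, hj, (hθ j a).2]

theorem sum_marginalAt_update_insert (hθ : IsCPT θ) {S : Finset (Fin J)} {j : Fin J} (hj : j ∉ S)
    (z : Fin J → Fin V) :
    ∑ v, marginalAt ν θ (insert j S) (Function.update z j v) = marginalAt ν θ S z := by
  have hupdate : ∀ a v, condTable θ (insert j S) a (Function.update z j v)
      = θ j a v * condTable θ S a z := by
    intro a v
    simp only [condTable, Matrix.of_apply, prod_insert hj, Function.update_self]
    congr 1
    exact prod_congr rfl fun i hi => by rw [Function.update_of_ne (ne_of_mem_of_not_mem hi hj)]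
  simp only [marginalAt, hupdate]
  rw [sum_comm]
  refine sum_congr rfl fun a _ => ?_
  rw [← mul_sum, ← sum_mul, (hθ j a).2, one_mul]

end Marginals

section Transfer

variable {ν : (Fin K → Fin H) → ℝ} {θ : Fin J → (Fin K → Fin H) → Fin V → ℝ}
  {K' : ℕ} {ν' : (Fin K' → Fin H) → ℝ} {θ' : Fin J → (Fin K' → Fin H) → Fin V → ℝ}

theorem marginalAt_eq_of_union (hθ : IsCPT θ) (hθ' : IsCPT θ') {S U : Finset (Fin J)}
    (hSU : Disjoint S U) (h : marginalAt ν θ (S ∪ U) = marginalAt ν' θ' (S ∪ U)) :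
    marginalAt ν θ S = marginalAt ν' θ' S := by
  induction U using Finset.induction_on generalizing S with
  | empty => simpa using h
  | insert j U hjU ih =>
    have hjS : j ∉ S := disjoint_right.mp hSU (mem_insert_self j U)
    have hjS' : Disjoint (insert j S) U :=
      disjoint_insert_left.mpr ⟨hjU, disjoint_of_subset_right (subset_insert j U) hSU⟩
    have hins := ih hjS' (by rwa [insert_union, ← union_insert])
    funext z
    rw [← sum_marginalAt_update_insert ν θ hθ hjS, ← sum_marginalAt_update_insert ν' θ' hθ' hjS,
      hins]

theorem marginalAt_eq_of_card_le (hθ : IsCPT θ) (hθ' : IsCPT θ') {n : ℕ} (hn : n ≤ J)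
    (h : ∀ T : Finset (Fin J), T.card = n → marginalP ν θ T = marginalP ν' θ' T)
    {S : Finset (Fin J)} (hS : S.card ≤ n) : marginalAt ν θ S = marginalAt ν' θ' S := by
  obtain ⟨T, hST, hT⟩ := exists_superset_card_eq hS (by simpa using hn)
  refine marginalAt_eq_of_union (U := T \ S) hθ hθ' disjoint_sdiff ?_
  funext z
  rw [union_sdiff_of_subset hST, ← marginalP_eq_marginalAt ν θ hθ,
    ← marginalP_eq_marginalAt ν' θ' hθ', h T hT]

theorem unfolding_apply {S₁ S₂ : Finset (Fin J)} (hd : Disjoint S₁ S₂) (z₁ z₂ : Fin J → Fin V) :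
    unfolding ν θ S₁ S₂ z₁ z₂ = marginalAt ν θ (S₁ ∪ S₂) (S₁.piecewise z₁ z₂) := by
  simp only [unfolding, Matrix.mul_apply, jointTable, marginalAt, condTable, Matrix.of_apply,
    prod_union hd, mul_assoc]
  refine sum_congr rfl fun a _ => ?_
  congr 2
  · exact prod_congr rfl fun j hj => by rw [piecewise_eq_of_mem _ _ _ hj]
  · exact prod_congr rfl fun j hj => by
      rw [piecewise_eq_of_notMem _ _ _ (disjoint_right.mp hd hj)]

end Transfer

def IsLowRank (m n : ℕ) (ν : (Fin K → Fin H) → ℝ) (θ : Fin J → (Fin K → Fin H) → Fin V → ℝ)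
    (T : Finset (Fin J)) : Prop :=
  ∀ S, Disjoint T S → (T ∪ S).card ≤ 2 * m → (unfolding ν θ T S).rank ≤ H ^ n

theorem isLowRank_congr {m n : ℕ} {ν : (Fin K → Fin H) → ℝ}
    {θ : Fin J → (Fin K → Fin H) → Fin V → ℝ} {K' : ℕ} {ν' : (Fin K' → Fin H) → ℝ}
    {θ' : Fin J → (Fin K' → Fin H) → Fin V → ℝ}
    (h : ∀ S : Finset (Fin J), S.card ≤ 2 * m → marginalAt ν θ S = marginalAt ν' θ' S)
    (T : Finset (Fin J)) : IsLowRank m n ν θ T ↔ IsLowRank m n ν' θ' T := by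
  have hU : ∀ S, Disjoint T S → (T ∪ S).card ≤ 2 * m → unfolding ν θ T S = unfolding ν' θ' T S :=
    fun S hd hc => by ext z₁ z₂; rw [unfolding_apply hd, unfolding_apply hd, h _ hc]
  exact forall_congr' fun S => forall_congr' fun hd => forall_congr' fun hc => by rw [hU S hd hc]

theorem exists_mul_eq_one_of_rank_eq_card {R m n : Type*} [Field R] [Fintype m] [Fintype n]
    [DecidableEq n] (A : Matrix m n R) (h : A.rank = Fintype.card n) :
    ∃ B : Matrix n m R, B * A = 1 := by
  have hrange : LinearMap.range Aᵀ.mulVecLin = ⊤ := Submodule.eq_top_of_finrank_eq <| by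
    rw [Module.finrank_fintype_fun_eq_card, ← h, ← Matrix.rank_transpose]; rfl
  choose x hx using fun i : n => LinearMap.range_eq_top.mp hrange (Pi.single i 1)
  refine ⟨Matrix.of x, ?_⟩
  ext i i'
  have := congrFun (hx i) i'
  simp only [Matrix.mulVecLin_apply, Matrix.mulVec, dotProduct, Matrix.transpose_apply,
    Pi.single_apply] at this
  rw [Matrix.mul_apply, Matrix.one_apply]
  convert this using 1
  · exact sum_congr rfl fun _ _ => mul_comm _ _
  · exact if_congr eq_comm rfl rfl

theorem linearIndependent_smul_pair {ρ : Type*} [Fintype ρ] {x y : ρ → ℝ} (hx : ∑ v, x v = 1)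
    (hy : ∑ v, y v = 1) (hxy : x ≠ y) {c d : ℝ} (hc : c ≠ 0) (hd : d ≠ 0) :
    LinearIndependent ℝ ![c • x, d • y] := by
  rw [LinearIndependent.pair_iff]
  intro s t hst
  have hpoint : ∀ v, s * (c * x v) + t * (d * y v) = 0 := fun v => by
    simpa using congrFun hst v
  have hsum : s * c + t * d = 0 := by
    have := Finset.sum_eq_zero (s := univ) fun v _ => hpoint v
    rwa [sum_add_distrib, ← mul_sum, ← mul_sum, ← mul_sum, ← mul_sum, hx, hy, mul_one,
      mul_one] at this
  -- both vectors sum to `1`, so a vanishing combination is a multiple of `x - y`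
  have hsc : s * c = 0 := by
    by_contra h
    refine hxy (funext fun v => sub_eq_zero.mp ?_)
    have : s * c * (x v - y v) = 0 := by linear_combination hpoint v - y v * hsum
    exact (mul_eq_zero.mp this).resolve_left h
  have htd : t * d = 0 := by linarith
  exact ⟨(mul_eq_zero.mp hsc).resolve_right hc, (mul_eq_zero.mp htd).resolve_right hd⟩

theorem card_lt_rank_of_blockColumns {γ ρ κ : Type*} [Fintype γ] [DecidableEq γ] [Fintype ρ]
    [Fintype κ] (N : Matrix (γ × ρ) κ ℝ) {π : κ → γ} (hπ : Function.Surjective π) (w : κ → ρ → ℝ)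
    (hN : ∀ g v a, N (g, v) a = if π a = g then w a v else 0) (hw : ∀ a, w a ≠ 0)
    {a₁ a₂ : κ} (h₁₂ : π a₁ = π a₂) (hli : LinearIndependent ℝ ![w a₁, w a₂]) :
    Fintype.card γ < N.rank := by
  let s : γ → κ := Function.update (Function.surjInv hπ) (π a₁) a₁
  have hs : ∀ g, π (s g) = g := fun g => by
    by_cases hg : g = π a₁
    · simp [s, hg]
    · simp [s, hg, Function.surjInv_eq hπ]
  -- one column from every block, and a second one from the block of `a₁` and `a₂`
  let col : Option γ → κ := fun o => o.elim a₂ s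
  have hcols : LinearIndependent ℝ (N.submatrix id col)ᵀ.row := by
    rw [Fintype.linearIndependent_iff]
    intro c hc
    have hblock : ∀ g, (if π a₂ = g then c none • w a₂ else 0) + c (some g) • w (s g) = 0 := by
      intro g
      funext v
      have := congrFun hc (g, v)
      simp only [Fintype.sum_option, Matrix.row, Matrix.transpose_apply, Matrix.submatrix_apply,
        id, col, Option.elim, hN, hs, Finset.sum_apply, Pi.smul_apply, smul_eq_mul, mul_ite,
        mul_zero, Finset.sum_ite_eq', mem_univ] at this
      split_ifs at this ⊢ <;> simpa using this
    have hsome : ∀ g, g ≠ π a₂ → c (some g) = 0 := fun g hg => by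
      have := hblock g
      rw [if_neg (Ne.symm hg), zero_add, smul_eq_zero] at this
      exact this.resolve_right (hw _)
    have hpair := LinearIndependent.pair_iff.mp hli (c (some (π a₂))) (c none) <| by
      have := hblock (π a₂)
      rwa [if_pos rfl, ← h₁₂, show s (π a₁) = a₁ by simp [s], add_comm, h₁₂] at this
    rintro (_ | g)
    · exact hpair.2
    · by_cases hg : g = π a₂
      · exact hg ▸ hpair.1
      · exact hsome g hg
  calc Fintype.card γ < Fintype.card (Option γ) := by simp
    _ = (N.submatrix id col).rank := by rw [← hcols.rank_matrix, Matrix.rank_transpose]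
    _ ≤ N.rank := Matrix.rank_submatrix_le _ _ _

section Rank

variable [NeZero H] {G : Fin J → Fin K → Bool} {ν : (Fin K → Fin H) → ℝ}
  {θ : Fin J → (Fin K → Fin H) → Fin V → ℝ}

theorem rank_unfolding_le (hdep : DependsOnlyOnCo G θ) {S₁ : Finset (Fin J)} (S₂ : Finset (Fin J))
    {B : Finset (Fin K)} (hB : ∀ j ∈ S₁, co G j ⊆ B) :
    (unfolding ν θ S₁ S₂).rank ≤ H ^ B.card := by
  let X : Matrix (Fin J → Fin V) ({k // k ∈ B} → Fin H) ℝ :=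
    Matrix.of fun z b => condTable θ S₁ (extendA B b) z
  let E : Matrix ({k // k ∈ B} → Fin H) (Fin K → Fin H) ℝ :=
    Matrix.of fun b a => if (fun k => a k.1) = b then ν a else 0
  have hX : jointTable ν θ S₁ = X * E := by
    ext z a
    simp only [jointTable, Matrix.mul_apply, X, E, Matrix.of_apply, mul_ite, mul_zero, sum_ite_eq,
      mem_univ, if_true, condTable]
    rw [mul_comm]
    congr 1
    refine prod_congr rfl fun j hj => ?_
    rw [hdep j a (extendA B fun k => a k) fun k hk => by simp [extendA, hB j hj hk]]
  calc (unfolding ν θ S₁ S₂).rank = (X * (E * condTable θ S₂)).rank := by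
        rw [unfolding, hX, Matrix.mul_assoc]
    _ ≤ Fintype.card ({k // k ∈ B} → Fin H) := (X.rank_mul_le_left _).trans X.rank_le_card_width
    _ = H ^ B.card := by simp

theorem exists_leftInverse (hdep : DependsOnlyOnCo G θ) (hA1 : Assumption1 G θ) (j : Fin J) :
    ∃ L : (Fin K → Fin H) → Fin V → ℝ, ∀ k, co G j = {k} →
      ∀ a a', ∑ v, θ j a v * L a' v = if a k = a' k then 1 else 0 := by
  by_cases hpure : ∃ k, co G j = {k}
  swap
  · exact ⟨0, fun k hk => absurd ⟨k, hk⟩ hpure⟩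
  obtain ⟨k, hjk⟩ := hpure
  have hconst : ∀ a, θ j a = θ j (fun _ => a k) := fun a =>
    hdep j _ _ fun k' hk' => by rw [hjk, mem_singleton] at hk'; rw [hk']
  let Θ : Matrix (Fin V) (Fin H) ℝ := Matrix.of fun v h => θ j (fun _ => h) v
  have hcpt : cpt θ {j} {k} = Θ.submatrix (Equiv.funUnique _ _) (Equiv.funUnique _ _) := by
    ext y b
    simp only [cpt, Θ, Matrix.of_apply, Matrix.submatrix_apply, Equiv.funUnique_apply,
      Fintype.prod_unique]
    show θ j (extendA {k} b) _ = _
    rw [hconst (extendA _ b)]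
    simp [extendA]
    rfl
  have hrank : Θ.rank = Fintype.card (Fin H) := by
    rw [Fintype.card_fin]
    have := hA1 j (by simp [hjk])
    rwa [hjk, hcpt, Matrix.rank_submatrix] at this
  obtain ⟨B, hB⟩ := exists_mul_eq_one_of_rank_eq_card Θ hrank
  refine ⟨fun a' v => B (a' k) v, fun k' hk' a a' => ?_⟩
  obtain rfl : k = k' := singleton_inj.mp (hjk.symm.trans hk')
  have := congrFun (congrFun hB (a' k)) (a k)
  rw [Matrix.mul_apply, Matrix.one_apply] at this
  rw [hconst]
  convert this using 1
  · exact sum_congr rfl fun _ _ => mul_comm _ _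
  · exact if_congr eq_comm rfl rfl

theorem exists_condTable_mul_eq_one [NeZero V] (hdep : DependsOnlyOnCo G θ) (hθ : IsCPT θ)
    (hA1 : Assumption1 G θ) {S : Finset (Fin J)} (hS : ∀ k, ∃ j ∈ S, co G j = {k}) :
    ∃ R : Matrix (Fin J → Fin V) (Fin K → Fin H) ℝ, condTable θ S * R = 1 := by
  choose L hL using exists_leftInverse hdep hA1
  -- `R` is a product of one factor per coordinate: a left inverse on a pure child in `S`,
  -- the constant `1` on the other members of `S`, and a point mass outside `S`
  have hfactor : ∀ j, ∃ φ : (Fin K → Fin H) → Fin V → ℝ, ∀ a a',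
      ∑ u, (if j ∈ S then θ j a u else 1) * φ a' u
        = if ∀ k, j ∈ S → co G j = {k} → a k = a' k then 1 else 0 := by
    intro j
    by_cases hj : j ∈ S
    · by_cases hpure : ∃ k, co G j = {k}
      · obtain ⟨k, hk⟩ := hpure
        refine ⟨L j, fun a a' => ?_⟩
        simp only [if_pos hj, hL j k hk]
        refine if_congr ⟨fun h k' _ hk' => ?_, fun h => h k hj hk⟩ rfl rfl
        rwa [← singleton_inj.mp (hk.symm.trans hk')]
      · refine ⟨fun _ _ => 1, fun a a' => ?_⟩
        simp only [if_pos hj, mul_one, (hθ j a).2]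
        exact (if_pos fun k _ hk => absurd ⟨k, hk⟩ hpure).symm
    · refine ⟨fun _ u => if u = 0 then 1 else 0, fun a a' => ?_⟩
      simp [hj]
  choose φ hφ using hfactor
  refine ⟨Matrix.of fun z a' => ∏ j, φ j a' (z j), ?_⟩
  ext a a'
  simp only [Matrix.mul_apply, Matrix.of_apply, sum_condTable_mul_prod, hφ, Matrix.one_apply,
    prod_boole, mem_univ, true_implies]
  refine if_congr ⟨fun h => funext fun k => ?_, fun h j k _ _ => h ▸ rfl⟩ rfl rfl
  obtain ⟨j, hj, hjk⟩ := hS k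
  exact h j k hj hjk

theorem rank_jointTable_le_rank_unfolding [NeZero V] (hdep : DependsOnlyOnCo G θ)
    (hθ : IsCPT θ) (hA1 : Assumption1 G θ) (S₁ : Finset (Fin J)) {S₂ : Finset (Fin J)}
    (hS₂ : ∀ k, ∃ j ∈ S₂, co G j = {k}) :
    (jointTable ν θ S₁).rank ≤ (unfolding ν θ S₁ S₂).rank := by
  obtain ⟨R, hR⟩ := exists_condTable_mul_eq_one hdep hθ hA1 hS₂
  calc (jointTable ν θ S₁).rank = (unfolding ν θ S₁ S₂ * R).rank := by
        rw [unfolding, Matrix.mul_assoc, hR, Matrix.mul_one]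
    _ ≤ (unfolding ν θ S₁ S₂).rank := Matrix.rank_mul_le_left _ _

theorem rank_cpt_le_rank_jointTable [NeZero V] (hpos : ∀ a, 0 < ν a) (S : Finset (Fin J))
    (U : Finset (Fin K)) : (cpt θ S U).rank ≤ (jointTable ν θ S).rank := by
  let E : Matrix (Fin K → Fin H) ({k // k ∈ U} → Fin H) ℝ :=
    Matrix.of fun a b => if a = extendA U b then (ν a)⁻¹ else 0
  let extend : ({j // j ∈ S} → Fin V) → Fin J → Fin V := fun y j =>
    if h : j ∈ S then y ⟨j, h⟩ else 0
  have hcpt : cpt θ S U = (jointTable ν θ S * E).submatrix extend id := by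
    ext y b
    simp only [cpt, jointTable, condTable, E, Matrix.submatrix_apply, Matrix.mul_apply,
      Matrix.of_apply, id, mul_ite, mul_zero, sum_ite_eq', mem_univ, if_true]
    rw [mul_comm, ← mul_assoc, inv_mul_cancel₀ (hpos _).ne', one_mul, ← prod_coe_sort S]
    exact prod_congr rfl fun j _ => by simp [extend]
  rw [hcpt]
  exact (Matrix.rank_submatrix_le _ _ _).trans (Matrix.rank_mul_le_left _ _)

theorem exists_mul_jointTable_eq_blocks [NeZero V] (hdep : DependsOnlyOnCo G θ)
    (hA1 : Assumption1 G θ) {p : Fin K → Fin J} (hp : ∀ k, co G (p k) = {k}) {j₀ : Fin J}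
    {k₀ : Fin K} (hk₀ : k₀ ∈ co G j₀) :
    ∃ C : Matrix (({k // k ≠ k₀} → Fin H) × Fin V) (Fin J → Fin V) ℝ, ∀ g v a,
      (C * jointTable ν θ (insert j₀ ((univ.erase k₀).image p))) (g, v) a
        = if (fun k : {k // k ≠ k₀} => a k) = g then ν a * θ j₀ a v else 0 := by
  set F := (univ.erase k₀).image p
  choose L hL using exists_leftInverse hdep hA1
  let extend : ({k // k ≠ k₀} → Fin H) → Fin K → Fin H := fun g k =>
    if h : k = k₀ then 0 else g ⟨k, h⟩
  -- row `(g, v)` of `C` pins `Y_{j₀} = v` and applies at `g` the left inverse of each child in `F`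
  let φ : ({k // k ≠ k₀} → Fin H) × Fin V → Fin J → Fin V → ℝ := fun x j u =>
    if j = j₀ then (if u = x.2 then 1 else 0)
    else if j ∈ F then L j (extend x.1) u else if u = 0 then 1 else 0
  have hp_ne : ∀ k, p k = j₀ → k = k₀ := fun k hk => by
    rw [← hk, hp k, mem_singleton] at hk₀; exact hk₀.symm
  refine ⟨Matrix.of fun x z => ∏ j, φ x j (z j), fun g v a => ?_⟩
  have hfactor : ∀ j, ∑ u, (if j ∈ insert j₀ F then θ j a u else 1) * φ (g, v) j u
      = if j = j₀ then θ j₀ a v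
        else if ∀ k, k ≠ k₀ → p k = j → a k = extend g k then 1 else 0 := by
    intro j
    by_cases hj₀ : j = j₀
    · simp [φ, hj₀]
    by_cases hjF : j ∈ F
    · obtain ⟨b, hb, rfl⟩ := mem_image.mp hjF
      simp only [φ, if_neg hj₀, if_pos hjF, mem_insert_of_mem hjF, if_true, hL _ b (hp b)]
      refine if_congr ⟨fun h k _ hk => ?_, fun h => h b (ne_of_mem_erase hb) rfl⟩ rfl rfl
      obtain rfl : k = b := singleton_inj.mp ((hp k).symm.trans ((congrArg (co G) hk).trans (hp b)))
      exact h
    · have : ∀ k, k ≠ k₀ → p k ≠ j := fun k hk hkj =>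
        hjF (mem_image.mpr ⟨k, mem_erase.mpr ⟨hk, mem_univ k⟩, hkj⟩)
      simp only [φ, if_neg hj₀, if_neg hjF, mem_insert, hj₀, false_or, if_false, one_mul]
      simp only [sum_ite_eq', mem_univ, if_true]
      exact (if_pos fun k hk hkj => absurd hkj (this k hk)).symm
  have hcond : (∀ j ∈ univ.erase j₀, ∀ k, k ≠ k₀ → p k = j → a k = extend g k)
      ↔ (fun k : {k // k ≠ k₀} => a k) = g := by
    refine ⟨fun h => funext fun k => ?_, fun h j _ k hk _ => by simp [extend, hk, ← h]⟩
    have := h (p k) (mem_erase.mpr ⟨fun h' => k.2 (hp_ne k h'), mem_univ _⟩) k k.2 rfl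
    simpa [extend, k.2] using this
  rw [mul_jointTable_apply, ← mul_prod_erase _ _ (mem_univ j₀)]
  simp only [hfactor, if_pos, prod_ite_of_false (fun j hj => ne_of_mem_erase hj), prod_boole,
    hcond]
  split_ifs <;> ring

theorem pow_lt_rank_jointTable [NeZero V] (hdep : DependsOnlyOnCo G θ) (hθ : IsCPT θ)
    (hpos : ∀ a, 0 < ν a) (hA1 : Assumption1 G θ) (hA2 : Assumption2 G θ) {p : Fin K → Fin J}
    (hp : ∀ k, co G (p k) = {k}) {j₀ : Fin J} {k₀ : Fin K} (hk₀ : k₀ ∈ co G j₀) :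
    H ^ (K - 1) < (jointTable ν θ (insert j₀ ((univ.erase k₀).image p))).rank := by
  obtain ⟨C, hC⟩ := exists_mul_jointTable_eq_blocks (ν := ν) hdep hA1 hp hk₀
  obtain ⟨a, h, h', hne⟩ := hA2 j₀ k₀ hk₀
  have hsurj : Function.Surjective fun a : Fin K → Fin H => fun k : {k // k ≠ k₀} => a k :=
    fun g => ⟨fun k => if hk : k = k₀ then 0 else g ⟨k, hk⟩, funext fun k => by simp [k.2]⟩
  have hw : ∀ a, ν a • θ j₀ a ≠ 0 := fun a h0 => by
    have := congrArg (fun f => ∑ v, f v) h0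
    simp [← mul_sum, (hθ j₀ a).2, (hpos a).ne'] at this
  calc H ^ (K - 1) = Fintype.card ({k // k ≠ k₀} → Fin H) := by simp
    _ < (C * jointTable ν θ (insert j₀ ((univ.erase k₀).image p))).rank :=
        card_lt_rank_of_blockColumns _ hsurj (fun a => ν a • θ j₀ a)
          (fun g v a => by rw [hC]; rfl) hw (a₁ := Function.update a k₀ h)
          (a₂ := Function.update a k₀ h') (funext fun k => by simp [Function.update_of_ne k.2])
          (linearIndependent_smul_pair (hθ j₀ _).2 (hθ j₀ _).2 hne (hpos _).ne' (hpos _).ne')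
    _ ≤ _ := Matrix.rank_mul_le_right _ _

end Rank

section Graph

variable {G : Fin J → Fin K → Bool}

theorem exists_co_eq_singleton (hpure : PureChild G) (k : Fin K) : ∃ j, co G j = {k} := by
  obtain ⟨j, hj⟩ := card_pos.mp (lt_of_lt_of_le two_pos (hpure.2 k))
  exact ⟨j, (mem_filter.mp hj).2⟩

theorem exists_pureChild_not_mem (hpure : PureChild G) (k : Fin K) {E : Finset (Fin J)}
    {j₁ : Fin J} (hE : ∀ j ∈ E, co G j = {k} → j = j₁) : ∃ j ∉ E, co G j = {k} := by
  obtain ⟨x, hx, y, hy, hxy⟩ := one_lt_card.mp (hpure.2 k)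
  rw [mem_filter] at hx hy
  by_contra! h
  have hmem : ∀ z, co G z = {k} → z ∈ E := fun z hz => by
    by_contra hzE; exact h z hzE hz
  exact hxy ((hE x (hmem x hx.2) hx.2).trans (hE y (hmem y hy.2) hy.2).symm)

theorem exists_pureCover_disjoint (hpure : PureChild G) {E : Finset (Fin J)}
    (hE : ∀ k, ∃ j₁, ∀ j ∈ E, co G j = {k} → j = j₁) :
    ∃ S, Disjoint E S ∧ S.card ≤ K ∧ ∀ k, ∃ j ∈ S, co G j = {k} := by
  choose j₁ hj₁ using hE
  choose q hqE hq using fun k => exists_pureChild_not_mem hpure k (hj₁ k)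
  refine ⟨univ.image q, disjoint_right.mpr fun j hj => ?_, card_image_le.trans (by simp),
    fun k => ⟨q k, mem_image_of_mem _ (mem_univ _), hq k⟩⟩
  obtain ⟨k, -, rfl⟩ := mem_image.mp hj
  exact hqE k

variable [NeZero H] [NeZero V] {ν : (Fin K → Fin H) → ℝ}
  {θ : Fin J → (Fin K → Fin H) → Fin V → ℝ}

theorem isLowRank_pair_iff (hdep : DependsOnlyOnCo G θ) (hθ : IsCPT θ) (hpos : ∀ a, 0 < ν a)
    (hA1 : Assumption1 G θ) (hpure : PureChild G) (hpr : PairwiseRank G θ) {m : ℕ}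
    (hm : K + 2 ≤ 2 * m) {j₁ j₂ : Fin J} (hne : j₁ ≠ j₂) :
    IsLowRank m 1 ν θ {j₁, j₂} ↔ ∃ k, co G j₁ = {k} ∧ co G j₂ = {k} := by
  constructor
  · intro hlow
    by_contra hns
    have hunion : ¬∃ k, co G j₁ ∪ co G j₂ = {k} := fun ⟨k, hk⟩ =>
      hns ⟨k, (hpure.1 j₁).subset_singleton_iff.mp (hk ▸ subset_union_left),
        (hpure.1 j₂).subset_singleton_iff.mp (hk ▸ subset_union_right)⟩
    obtain ⟨S, hdisj, hcard, hS⟩ := exists_pureCover_disjoint hpure (E := {j₁, j₂}) fun k => by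
      by_cases h₁ : co G j₁ = {k}
      · exact ⟨j₁, by simpa using fun h₂ => absurd ⟨k, h₁, h₂⟩ hns⟩
      · exact ⟨j₂, by simpa using fun h => absurd h h₁⟩
    have hup := hlow S hdisj <| (card_union_le _ _).trans <| by
      linarith [card_le_two (a := j₁) (b := j₂)]
    have hlow₁ := hpr j₁ j₂ hne hunion
    have hlow₂ := rank_cpt_le_rank_jointTable (θ := θ) hpos {j₁, j₂} (co G j₁ ∪ co G j₂)
    have hlow₃ := rank_jointTable_le_rank_unfolding (ν := ν) hdep hθ hA1 {j₁, j₂} hS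
    rw [pow_one] at hup
    omega
  · rintro ⟨k, h₁, h₂⟩ S - -
    simpa using rank_unfolding_le (ν := ν) hdep S (B := {k}) (by simp [h₁, h₂])

theorem isLowRank_iff_notMem_co (hdep : DependsOnlyOnCo G θ) (hθ : IsCPT θ)
    (hpos : ∀ a, 0 < ν a) (hA1 : Assumption1 G θ) (hA2 : Assumption2 G θ) (hpure : PureChild G)
    {m : ℕ} (hm : K ≤ m) {p : Fin K → Fin J} (hp : ∀ k, co G (p k) = {k}) (j₀ : Fin J)
    (k₀ : Fin K) :
    IsLowRank m (K - 1) ν θ (insert j₀ ((univ.erase k₀).image p)) ↔ k₀ ∉ co G j₀ := by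
  have hFcard : ((univ.erase k₀).image p).card ≤ K - 1 :=
    card_image_le.trans (by simp [card_erase_of_mem])
  constructor
  · intro hlow hk₀
    obtain ⟨S, hdisj, hcard, hS⟩ := exists_pureCover_disjoint hpure
        (E := insert j₀ ((univ.erase k₀).image p)) fun k =>
      ⟨if k = k₀ then j₀ else p k, fun j hj hjk => by
        rcases mem_insert.mp hj with rfl | hjF
        · rw [hjk, mem_singleton] at hk₀; simp [hk₀]
        · obtain ⟨b, hb, rfl⟩ := mem_image.mp hjF
          obtain rfl : b = k := singleton_inj.mp ((hp b).symm.trans hjk)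
          simp [ne_of_mem_erase hb]⟩
    have hup := hlow S hdisj <| (card_union_le _ _).trans <| by
      have := card_insert_le j₀ ((univ.erase k₀).image p)
      have := k₀.pos
      omega
    have hlow₁ := pow_lt_rank_jointTable (ν := ν) hdep hθ hpos hA1 hA2 hp hk₀
    have hlow₂ := rank_jointTable_le_rank_unfolding (ν := ν) hdep hθ hA1
      (insert j₀ ((univ.erase k₀).image p)) hS
    omega
  · intro hk₀ S _ _
    have hsub : ∀ j ∈ insert j₀ ((univ.erase k₀).image p), co G j ⊆ univ.erase k₀ := by
      intro j hj k hk
      refine mem_erase.mpr ⟨?_, mem_univ k⟩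
      rcases mem_insert.mp hj with rfl | hjF
      · exact fun h => hk₀ (h ▸ hk)
      · obtain ⟨b, hb, rfl⟩ := mem_image.mp hjF
        rw [hp b, mem_singleton] at hk
        exact hk ▸ ne_of_mem_erase hb
    simpa [card_erase_of_mem] using rank_unfolding_le (ν := ν) hdep S hsub

end Graph

theorem exists_map_of_pureChild_transfer {G : Fin J → Fin K → Bool} {K' : ℕ}
    {G' : Fin J → Fin K' → Bool} (hpure : PureChild G)
    (htransfer : ∀ x y k, x ≠ y → co G x = {k} → co G y = {k} →
      ∃ k', co G' x = {k'} ∧ co G' y = {k'}) :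
    ∃ e : Fin K → Fin K', ∀ x k, co G x = {k} → co G' x = {e k} := by
  have hlift : ∀ k, ∃ k', ∀ x, co G x = {k} → co G' x = {k'} := by
    intro k
    obtain ⟨x, hx, y, hy, hxy⟩ := one_lt_card.mp (hpure.2 k)
    rw [mem_filter] at hx hy
    obtain ⟨k', hx', -⟩ := htransfer x y k hxy hx.2 hy.2
    refine ⟨k', fun z hz => ?_⟩
    by_cases hzx : z = x
    · rwa [hzx]
    · obtain ⟨k'', hz', hx''⟩ := htransfer z x k hzx hz hx.2
      rwa [← hx'', hx'] at hz'
  choose e he using hlift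
  exact ⟨e, fun x k hx => he k x hx⟩

theorem exists_equiv_of_pureChild_iff {G : Fin J → Fin K → Bool} {K' : ℕ}
    {G' : Fin J → Fin K' → Bool} (hpure : PureChild G) (hpure' : PureChild G')
    (hpair : ∀ x y, x ≠ y →
      ((∃ k, co G x = {k} ∧ co G y = {k}) ↔ ∃ k', co G' x = {k'} ∧ co G' y = {k'})) :
    ∃ e : Fin K ≃ Fin K', ∀ x k, co G x = {k} → co G' x = {e k} := by
  obtain ⟨e, he⟩ := exists_map_of_pureChild_transfer hpure fun x y k hxy hx hy =>
    (hpair x y hxy).mp ⟨k, hx, hy⟩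
  obtain ⟨f, hf⟩ := exists_map_of_pureChild_transfer hpure' fun x y k hxy hx hy =>
    (hpair x y hxy).mpr ⟨k, hx, hy⟩
  choose p hp using exists_co_eq_singleton hpure
  choose p' hp' using exists_co_eq_singleton hpure'
  refine ⟨⟨e, f, fun k => ?_, fun k' => ?_⟩, he⟩
  · exact singleton_inj.mp ((hf _ _ (he _ _ (hp k))).symm.trans (hp k))
  · exact singleton_inj.mp ((he _ _ (hf _ _ (hp' k'))).symm.trans (hp' k'))

theorem graph_identifiable_from_marginals_general
    {J K K' V H : ℕ} [NeZero H] (hVH : H ≤ V)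
    (hK : 2 ≤ K) (hJ : 2 * max K K' ≤ J)
    (G : Fin J → Fin K → Bool) (G' : Fin J → Fin K' → Bool)
    (ν : (Fin K → Fin H) → ℝ) (θ : Fin J → (Fin K → Fin H) → Fin V → ℝ)
    (ν' : (Fin K' → Fin H) → ℝ) (θ' : Fin J → (Fin K' → Fin H) → Fin V → ℝ)
    (hdep : DependsOnlyOnCo G θ) (hcpt : IsCPT θ)
    (hpos : ∀ a, 0 < ν a)
    (hA1 : Assumption1 G θ) (hA2 : Assumption2 G θ)
    (hpure : PureChild G) (hpr : PairwiseRank G θ)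
    (hdep' : DependsOnlyOnCo G' θ') (hcpt' : IsCPT θ')
    (hpos' : ∀ a, 0 < ν' a)
    (hA1' : Assumption1 G' θ') (hA2' : Assumption2 G' θ')
    (hpure' : PureChild G') (hpr' : PairwiseRank G' θ')
    (heq : ∀ S : Finset (Fin J), S.card = 2 * max K K' →
      marginalP ν θ S = marginalP ν' θ' S) :
    K = K' ∧ ∃ e : Fin K ≃ Fin K', ∀ (j : Fin J) (k : Fin K), G' j (e k) = G j k := by
  have : NeZero V := ⟨by have := NeZero.pos H; omega⟩
  have hmarg : ∀ S : Finset (Fin J), S.card ≤ 2 * max K K' →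
      marginalAt ν θ S = marginalAt ν' θ' S := fun S hS =>
    marginalAt_eq_of_card_le hcpt hcpt' hJ heq hS
  have hpair : ∀ x y, x ≠ y → ((∃ k, co G x = {k} ∧ co G y = {k}) ↔
      ∃ k', co G' x = {k'} ∧ co G' y = {k'}) := fun x y hxy => by
    rw [← isLowRank_pair_iff (m := max K K') hdep hcpt hpos hA1 hpure hpr (by omega) hxy,
      ← isLowRank_pair_iff (m := max K K') hdep' hcpt' hpos' hA1' hpure' hpr' (by omega) hxy]
    exact isLowRank_congr hmarg _
  obtain ⟨e, he⟩ := exists_equiv_of_pureChild_iff hpure hpure' hpair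
  obtain rfl : K = K' := by simpa using Fintype.card_congr e
  choose p hp using exists_co_eq_singleton hpure
  have hpe : ∀ k', co G' ((p ∘ e.symm) k') = {k'} := fun k' => by
    rw [Function.comp_apply, he _ _ (hp _), e.apply_symm_apply]
  refine ⟨rfl, e, fun j k => ?_⟩
  have key : k ∉ co G j ↔ e k ∉ co G' j := by
    rw [← isLowRank_iff_notMem_co hdep hcpt hpos hA1 hA2 hpure (le_max_left K K) hp j k,
      ← isLowRank_iff_notMem_co hdep' hcpt' hpos' hA1' hA2' hpure' (le_max_left K K) hpe j (e k),
      ← image_image, image_erase e.symm.injective, image_univ_equiv, e.symm_apply_apply]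
    exact isLowRank_congr hmarg _
  rw [Bool.eq_iff_iff]
  simpa [co, not_iff_not] using key.symm

/-- Corollary 1: the number of latent variables and the graph are
identifiable from the marginal distributions of all subsets of `2·max(K,K')`
observed variables. -/
theorem graph_identifiable_from_marginals
    {J K K' V H : ℕ} [NeZero H] (hH : 2 ≤ H) (hVH : H ≤ V)
    (hK : 2 ≤ K) (hK' : 2 ≤ K') (hJ : 2 * max K K' ≤ J)
    (G : Fin J → Fin K → Bool) (G' : Fin J → Fin K' → Bool)
    (ν : (Fin K → Fin H) → ℝ) (θ : Fin J → (Fin K → Fin H) → Fin V → ℝ)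
    (ν' : (Fin K' → Fin H) → ℝ) (θ' : Fin J → (Fin K' → Fin H) → Fin V → ℝ)
    (hdep : DependsOnlyOnCo G θ) (hcpt : IsCPT θ) (hpmf : IsPMF ν)
    (hpos : ∀ a, 0 < ν a)
    (hA1 : Assumption1 G θ) (hA2 : Assumption2 G θ)
    (hpure : PureChild G) (hpr : PairwiseRank G θ)
    (hdep' : DependsOnlyOnCo G' θ') (hcpt' : IsCPT θ') (hpmf' : IsPMF ν')
    (hpos' : ∀ a, 0 < ν' a)
    (hA1' : Assumption1 G' θ') (hA2' : Assumption2 G' θ')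
    (hpure' : PureChild G') (hpr' : PairwiseRank G' θ')
    (heq : ∀ S : Finset (Fin J), S.card = 2 * max K K' →
      marginalP ν θ S = marginalP ν' θ' S) :
    K = K' ∧ ∃ e : Fin K ≃ Fin K', ∀ (j : Fin J) (k : Fin K), G' j (e k) = G j k :=
  graph_identifiable_from_marginals_general hVH hK hJ G G' ν θ ν' θ' hdep hcpt hpos hA1 hA2 hpure
    hpr hdep' hcpt' hpos' hA1' hA2' hpure' hpr' heq

end LBGM
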